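/- arXiv:2204.02157 — 2 statements merged into one kernel-verified Lean document; each statement's English description precedes it below -/
import Mathlib

section
/- Let $(M,J)$ be a compact almost complex manifold of real dimension $2n$ and let $\omega$ be a strongly Gauduchon Hermitian metric on $(M,J)$, i.e. $\partial\bar\partial\omega^{n-1}=0$ and $\partial\omega^{n-1}=\bar\partial\lambda$ for some $(n,n-2)$-form $\lambda$. Then $\int_M \partial\eta\wedge\omega^{n-1}=0$ for every $\bar\partial$-harmonic $(0,1)$-form $\eta\in\mathcal{H}^{0,1}_{\bar\partial}(M)$, i.e. $\omega$ satisfies the integral condition. -/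
/-!
An abstract framework for the bigraded algebra of complex-valued differential forms
on a compact almost complex manifold of real dimension `2n`, together with the
operators `μ, ∂, ∂̄, μ̄` (the components of the exterior derivative `d`), complex
conjugation, the wedge product and integration over the (compact) manifold.
A Hermitian metric is encoded through its fundamental form and its `ℂ`-linear
Hodge star operator.
-/

/-- The complex-valued differential forms of a compact almost complex manifold of
real dimension `2n`:  `A` is the space of all forms, `F p q` is the subspace of
forms of bidegree `(p,q)`, `d = μ + ∂ + ∂̄ + μ̄`, and `integ` is integration over
the manifold (which kills all forms that have no component in the top bidegree
`(n,n)`, and satisfies Stokes' theorem). -/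
structure AlmostComplexForms where
  n : ℕ
  A : Type
  [addA : AddCommGroup A]
  [modA : Module ℂ A]
  F : ℤ → ℤ → Submodule ℂ A
  wedge : A →ₗ[ℂ] A →ₗ[ℂ] A
  one : A
  conj : A →+ A
  mu : A →ₗ[ℂ] A
  pd : A →ₗ[ℂ] A
  pdbar : A →ₗ[ℂ] A
  mubar : A →ₗ[ℂ] A
  integ : A →ₗ[ℂ] ℂ
  one_mem : one ∈ F 0 0
  one_wedge : ∀ a, wedge one a = a
  wedge_one : ∀ a, wedge a one = a
  wedge_assoc : ∀ a b c, wedge (wedge a b) c = wedge a (wedge b c)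
  wedge_mem : ∀ p q r s, ∀ a ∈ F p q, ∀ b ∈ F r s, wedge a b ∈ F (p + r) (q + s)
  wedge_comm : ∀ p q r s, ∀ a ∈ F p q, ∀ b ∈ F r s,
    wedge a b = ((-1 : ℂ) ^ ((p + q) * (r + s))) • wedge b a
  mu_mem : ∀ p q, ∀ a ∈ F p q, mu a ∈ F (p + 2) (q - 1)
  pd_mem : ∀ p q, ∀ a ∈ F p q, pd a ∈ F (p + 1) q
  pdbar_mem : ∀ p q, ∀ a ∈ F p q, pdbar a ∈ F p (q + 1)
  mubar_mem : ∀ p q, ∀ a ∈ F p q, mubar a ∈ F (p - 1) (q + 2)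
  d_squared : ∀ a, (mu + pd + pdbar + mubar) ((mu + pd + pdbar + mubar) a) = 0
  pd_leibniz : ∀ p q, ∀ a ∈ F p q, ∀ b,
    pd (wedge a b) = wedge (pd a) b + ((-1 : ℂ) ^ (p + q)) • wedge a (pd b)
  pdbar_leibniz : ∀ p q, ∀ a ∈ F p q, ∀ b,
    pdbar (wedge a b) = wedge (pdbar a) b + ((-1 : ℂ) ^ (p + q)) • wedge a (pdbar b)
  conj_conj : ∀ a, conj (conj a) = a
  conj_smul : ∀ (c : ℂ) (a : A), conj (c • a) = (starRingEnd ℂ) c • conj a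
  conj_mem : ∀ p q, ∀ a ∈ F p q, conj a ∈ F q p
  conj_pd : ∀ a, conj (pd a) = pdbar (conj a)
  conj_mu : ∀ a, conj (mu a) = mubar (conj a)
  conj_one : conj one = one
  conj_wedge : ∀ a b, conj (wedge a b) = wedge (conj a) (conj b)
  stokes : ∀ a, integ ((mu + pd + pdbar + mubar) a) = 0
  integ_eq_zero : ∀ p q, ∀ a ∈ F p q, (p ≠ (n : ℤ) ∨ q ≠ (n : ℤ)) → integ a = 0

attribute [instance] AlmostComplexForms.addA AlmostComplexForms.modA

namespace AlmostComplexForms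

/-- The exterior derivative `d = μ + ∂ + ∂̄ + μ̄`. -/
def d (X : AlmostComplexForms) : X.A →ₗ[ℂ] X.A := X.mu + X.pd + X.pdbar + X.mubar

/-- Wedge powers `a^k = a ∧ ⋯ ∧ a`. -/
def wpow (X : AlmostComplexForms) (a : X.A) : ℕ → X.A
  | 0 => X.one
  | k + 1 => X.wedge a (wpow X a k)

/-- The almost complex structure is integrable, i.e. `μ = μ̄ = 0`, so `d = ∂ + ∂̄`
(a complex manifold). -/
def Integrable (X : AlmostComplexForms) : Prop := X.mu = 0 ∧ X.mubar = 0

end AlmostComplexForms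

/-- A Hermitian metric on a compact almost complex `2n`-manifold, encoded by its
fundamental form `ω` (a real positive `(1,1)`-form) and its `ℂ`-linear Hodge star
operator, for which `*ω = ω^{n-1}/(n-1)!` and the associated `L²` pairing
`(a,b) ↦ ∫ a ∧ * b̄` is positive definite. -/
structure HermMetric (X : AlmostComplexForms) where
  omega : X.A
  star : X.A →ₗ[ℂ] X.A
  omega_mem : omega ∈ X.F 1 1
  omega_real : X.conj omega = omega
  star_mem : ∀ p q, ∀ a ∈ X.F p q, star a ∈ X.F ((X.n : ℤ) - q) ((X.n : ℤ) - p)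
  pos : ∀ a : X.A, a ≠ 0 → 0 < (X.integ (X.wedge a (star (X.conj a)))).re
  star_omega : (Nat.factorial (X.n - 1) : ℂ) • star omega = X.wpow omega (X.n - 1)

namespace HermMetric

variable {X : AlmostComplexForms} (h : HermMetric X)

/-- The `L²` Hermitian inner product `(a,b)_{L²} = ∫_M a ∧ * b̄`. -/
def innerL2 (a b : X.A) : ℂ := X.integ (X.wedge a (h.star (X.conj b)))

/-- The formal adjoint `∂* = - * ∂̄ *` of `∂`. -/
def pdStar (b : X.A) : X.A := -h.star (X.pdbar (h.star b))

/-- A `∂̄`-harmonic `(0,1)`-form: on a compact manifold, `η ∈ 𝓗^{0,1}_{∂̄}(M)`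
iff `∂̄ η = 0` and `∂ * η = 0`. -/
def IsHarm01 (η : X.A) : Prop := η ∈ X.F 0 1 ∧ X.pdbar η = 0 ∧ X.pd (h.star η) = 0

/-- The integral condition: `∫_M ∂η ∧ ω^{n-1} = 0` for every `∂̄`-harmonic
`(0,1)`-form `η`. -/
def IntegralCondition : Prop :=
  ∀ η : X.A, h.IsHarm01 η → X.integ (X.wedge (X.pd η) (X.wpow h.omega (X.n - 1))) = 0

/-- `ω` is Gauduchon: `∂ ∂̄ ω^{n-1} = 0`. -/
def Gauduchon : Prop := X.pd (X.pdbar (X.wpow h.omega (X.n - 1))) = 0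

/-- `ω` is strongly Gauduchon: it is Gauduchon and `∂ ω^{n-1}` is `∂̄`-exact,
`∂ ω^{n-1} = ∂̄ λ` for some `(n, n-2)`-form `λ`. -/
def StronglyGauduchon : Prop :=
  h.Gauduchon ∧
    ∃ l ∈ X.F (X.n : ℤ) ((X.n : ℤ) - 2), X.pd (X.wpow h.omega (X.n - 1)) = X.pdbar l

end HermMetric

section Aux

open AlmostComplexForms

lemma wpow_mem_aux (X : AlmostComplexForms) {a : X.A} (ha : a ∈ X.F 1 1) :
    ∀ k : ℕ, X.wpow a k ∈ X.F (k : ℤ) (k : ℤ)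
  | 0 => by simpa [AlmostComplexForms.wpow] using X.one_mem
  | k + 1 => by
    have := X.wedge_mem 1 1 (k : ℤ) (k : ℤ) a ha _ (wpow_mem_aux X ha k)
    have h2 : (1 : ℤ) + (k : ℤ) = ((k + 1 : ℕ) : ℤ) := by push_cast; ring
    rw [h2] at this
    exact this

lemma integ_components_aux (X : AlmostComplexForms) (a : X.A) :
    X.integ (X.mu a) + X.integ (X.pd a) + X.integ (X.pdbar a) + X.integ (X.mubar a) = 0 := by
  have := X.stokes a
  simp only [LinearMap.add_apply] at this
  simpa [map_add] using this

lemma integ_pd_aux (X : AlmostComplexForms) {p q : ℤ} {a : X.A} (ha : a ∈ X.F p q)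
    (h1 : p + 2 ≠ (X.n : ℤ) ∨ q - 1 ≠ (X.n : ℤ))
    (h2 : p ≠ (X.n : ℤ) ∨ q + 1 ≠ (X.n : ℤ))
    (h3 : p - 1 ≠ (X.n : ℤ) ∨ q + 2 ≠ (X.n : ℤ)) :
    X.integ (X.pd a) = 0 := by
  have c := integ_components_aux X a
  rw [X.integ_eq_zero _ _ _ (X.mu_mem p q a ha) h1,
    X.integ_eq_zero _ _ _ (X.pdbar_mem p q a ha) h2,
    X.integ_eq_zero _ _ _ (X.mubar_mem p q a ha) h3] at c
  linear_combination c

lemma integ_pdbar_aux (X : AlmostComplexForms) {p q : ℤ} {a : X.A} (ha : a ∈ X.F p q)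
    (h1 : p + 2 ≠ (X.n : ℤ) ∨ q - 1 ≠ (X.n : ℤ))
    (h2 : p + 1 ≠ (X.n : ℤ) ∨ q ≠ (X.n : ℤ))
    (h3 : p - 1 ≠ (X.n : ℤ) ∨ q + 2 ≠ (X.n : ℤ)) :
    X.integ (X.pdbar a) = 0 := by
  have c := integ_components_aux X a
  rw [X.integ_eq_zero _ _ _ (X.mu_mem p q a ha) h1,
    X.integ_eq_zero _ _ _ (X.pd_mem p q a ha) h2,
    X.integ_eq_zero _ _ _ (X.mubar_mem p q a ha) h3] at c
  linear_combination c

end Aux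

/-- On a compact almost complex manifold of real dimension `2n`,
every strongly Gauduchon Hermitian metric satisfies the integral condition
`∫_M ∂η ∧ ω^{n-1} = 0` for every `∂̄`-harmonic `(0,1)`-form `η`. -/
theorem stronglyGauduchon_implies_integralCondition
    (X : AlmostComplexForms) (h : HermMetric X)
    (hsG : h.StronglyGauduchon) :
    h.IntegralCondition := by
  obtain ⟨-, l, hl, hlam⟩ := hsG
  rintro η ⟨hη, hdbη, -⟩
  set W := X.wpow h.omega (X.n - 1) with hW
  have hWmem : W ∈ X.F ((X.n - 1 : ℕ) : ℤ) ((X.n - 1 : ℕ) : ℤ) :=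
    wpow_mem_aux X h.omega_mem (X.n - 1)
  have hηW : X.wedge η W ∈ X.F (0 + ((X.n - 1 : ℕ) : ℤ)) (1 + ((X.n - 1 : ℕ) : ℤ)) :=
    X.wedge_mem 0 1 _ _ η hη W hWmem
  have hintpd : X.integ (X.pd (X.wedge η W)) = 0 := by
    apply integ_pd_aux X hηW
    · left; omega
    · right; omega
    · right; omega
  have hleib := X.pd_leibniz 0 1 η hη W
  have hsgn : ((-1 : ℂ) ^ ((0 : ℤ) + 1)) = -1 := by norm_num
  rw [hsgn, neg_one_smul] at hleib
  have key1 : X.integ (X.wedge (X.pd η) W) = X.integ (X.wedge η (X.pd W)) := by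
    have := congrArg X.integ hleib
    rw [hintpd, map_add, map_neg] at this
    linear_combination -this
  rw [key1, hlam]
  -- now show ∫ η ∧ ∂̄ l = 0
  have hηl : X.wedge η l ∈ X.F (0 + (X.n : ℤ)) (1 + ((X.n : ℤ) - 2)) :=
    X.wedge_mem 0 1 _ _ η hη l hl
  have hintpdb : X.integ (X.pdbar (X.wedge η l)) = 0 := by
    apply integ_pdbar_aux X hηl
    · left; omega
    · left; omega
    · right; omega
  have hleib2 := X.pdbar_leibniz 0 1 η hη l
  rw [hsgn, neg_one_smul, hdbη] at hleib2
  have := congrArg X.integ hleib2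
  rw [hintpdb, map_add, map_neg] at this
  simp only [map_zero, LinearMap.zero_apply] at this
  linear_combination this
end

section
/- On the 4-dimensional nilmanifold $M=\Gamma\backslash\mathrm{Nil}^4$ with invariant coframe $e^1,\dots,e^4$ satisfying $de^1=de^2=0$, $de^3=-e^{12}$, $de^4=-e^{13}$, and the invariant almost complex structure $J$ with $(1,0)$-coframe $\varphi^1,\varphi^2$ satisfying $d\varphi^1=0$ and $d\varphi^2=\tfrac{1}{2i}\varphi^{12}+\tfrac{1}{2i}(\varphi^{1\bar2}-\varphi^{2\bar1})-i\varphi^{1\bar1}+\tfrac{1}{2i}\varphi^{\bar1\bar2}$, the invariant Hermitian metric $\omega=\tfrac{1}{2i}(\varphi^{1\bar1}+\varphi^{2\bar2})$ satisfies $\partial\omega=-\tfrac12\varphi^{12\bar1}=\bar\partial(-i\varphi^{12})$ and $\partial\bar\partial\omega=0$; hence $\omega$ is strongly Gauduchon. -/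
/-- On the 4-dimensional nilmanifold `M = Γ\Nil⁴` with the
invariant almost complex structure `J` whose `(1,0)`-coframe `φ¹, φ²` satisfies
`dφ¹ = 0` and
`dφ² = (1/2i) φ¹∧φ² + (1/2i)(φ¹∧φ̄² - φ²∧φ̄¹) - i φ¹∧φ̄¹ + (1/2i) φ̄¹∧φ̄²`
(the bidegree components of `dφ²` being its `∂`, `∂̄` and `μ̄` parts), the
invariant Hermitian metric `ω = (1/2i)(φ¹∧φ̄¹ + φ²∧φ̄²)` satisfies
`∂ω = -(1/2) φ¹∧φ²∧φ̄¹ = ∂̄(-i φ¹∧φ²)` and `∂∂̄ω = 0`; hence `ω` is strongly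
Gauduchon. -/
theorem nil4_metric_stronglyGauduchon
    (X : AlmostComplexForms) (hn : X.n = 2)
    (φ1 φ2 : X.A) (h1 : φ1 ∈ X.F 1 0) (h2 : φ2 ∈ X.F 1 0)
    (hmu1 : X.mu φ1 = 0) (hpd1 : X.pd φ1 = 0)
    (hpdbar1 : X.pdbar φ1 = 0) (hmubar1 : X.mubar φ1 = 0)
    (hmu2 : X.mu φ2 = 0)
    (hpd2 : X.pd φ2 = (1 / (2 * Complex.I)) • X.wedge φ1 φ2)
    (hpdbar2 : X.pdbar φ2 =
      (1 / (2 * Complex.I)) • (X.wedge φ1 (X.conj φ2) - X.wedge φ2 (X.conj φ1)) -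
        Complex.I • X.wedge φ1 (X.conj φ1))
    (hmubar2 : X.mubar φ2 = (1 / (2 * Complex.I)) • X.wedge (X.conj φ1) (X.conj φ2))
    (h : HermMetric X)
    (hω : h.omega = (1 / (2 * Complex.I)) •
      (X.wedge φ1 (X.conj φ1) + X.wedge φ2 (X.conj φ2))) :
    X.pd h.omega = (-(1 : ℂ) / 2) • X.wedge φ1 (X.wedge φ2 (X.conj φ1)) ∧
      X.pd h.omega = X.pdbar ((-Complex.I) • X.wedge φ1 φ2) ∧
      X.pd (X.pdbar h.omega) = 0 ∧
      h.StronglyGauduchon := by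
  classical
  -- notation
  set κ : ℂ := 1 / (2 * Complex.I) with hκdef
  have hκconj : (starRingEnd ℂ) κ = -κ := by
    rw [hκdef, map_div₀, map_mul, map_one, map_ofNat, Complex.conj_I]; ring
  have hc1 : X.conj φ1 ∈ X.F 0 1 := X.conj_mem 1 0 φ1 h1
  have hc2 : X.conj φ2 ∈ X.F 0 1 := X.conj_mem 1 0 φ2 h2
  -- anticommutativity of degree-one forms
  have hac : ∀ (p q r s : ℤ) (a b : X.A), a ∈ X.F p q → b ∈ X.F r s →
      p + q = 1 → r + s = 1 → X.wedge a b = - X.wedge b a := by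
    intro p q r s a b ha hb hpq hrs
    have hcomm := X.wedge_comm p q r s a ha b hb
    rw [hpq, hrs] at hcomm
    simpa using hcomm
  have hself : ∀ (p q : ℤ) (a : X.A), a ∈ X.F p q → p + q = 1 →
      X.wedge a a = 0 := by
    intro p q a ha hpq
    have h0 := hac p q p q a a ha ha hpq hpq
    have h2' : (2:ℂ) • X.wedge a a = 0 := by
      rw [two_smul]; nth_rewrite 1 [h0]; exact neg_add_cancel _
    calc X.wedge a a = (2:ℂ)⁻¹ • ((2:ℂ) • X.wedge a a) := by
          rw [smul_smul]; norm_num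
      _ = 0 := by rw [h2', smul_zero]
  have s1 : X.wedge φ1 φ1 = 0 := hself 1 0 φ1 h1 (by norm_num)
  have s2 : X.wedge φ2 φ2 = 0 := hself 1 0 φ2 h2 (by norm_num)
  have sc1 : X.wedge (X.conj φ1) (X.conj φ1) = 0 := hself 0 1 _ hc1 (by norm_num)
  have a12 : X.wedge φ2 φ1 = - X.wedge φ1 φ2 := hac 1 0 1 0 φ2 φ1 h2 h1 (by norm_num) (by norm_num)
  have a1c2 : X.wedge (X.conj φ2) φ1 = - X.wedge φ1 (X.conj φ2) :=
    hac 0 1 1 0 _ φ1 hc2 h1 (by norm_num) (by norm_num)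
  have a2c1 : X.wedge (X.conj φ1) φ2 = - X.wedge φ2 (X.conj φ1) :=
    hac 0 1 1 0 _ φ2 hc1 h2 (by norm_num) (by norm_num)
  have a1c1 : X.wedge (X.conj φ1) φ1 = - X.wedge φ1 (X.conj φ1) :=
    hac 0 1 1 0 _ φ1 hc1 h1 (by norm_num) (by norm_num)
  -- derivatives of conjugates
  have pdc1 : X.pd (X.conj φ1) = 0 := by
    have h0 := X.conj_pd (X.conj φ1)
    rw [X.conj_conj, hpdbar1] at h0
    have h1' := congrArg X.conj h0
    rw [X.conj_conj] at h1'
    simpa using h1'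
  have pdbarc1 : X.pdbar (X.conj φ1) = 0 := by
    have h0 := X.conj_pd φ1
    rw [hpd1] at h0
    simpa using h0.symm
  have pdc2 : X.pd (X.conj φ2) =
      (-κ) • (X.wedge (X.conj φ1) φ2 - X.wedge (X.conj φ2) φ1)
        + Complex.I • X.wedge (X.conj φ1) φ1 := by
    have h0 := X.conj_pd (X.conj φ2)
    rw [X.conj_conj, hpdbar2] at h0
    have h1' := congrArg X.conj h0
    rw [X.conj_conj] at h1'
    rw [h1', map_sub, X.conj_smul, X.conj_smul, map_sub, X.conj_wedge, X.conj_wedge,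
      X.conj_wedge, X.conj_conj, X.conj_conj, hκconj, Complex.conj_I]
    module
  -- zero patterns
  have zf1 : ∀ x, X.wedge φ1 (X.wedge φ1 x) = 0 := by
    intro x; rw [← X.wedge_assoc, s1]; simp
  have zc1 : ∀ x, X.wedge (X.conj φ1) (X.wedge (X.conj φ1) x) = 0 := by
    intro x; rw [← X.wedge_assoc, sc1]; simp
  -- the 3-form rearrangements
  have t1 : X.wedge φ2 (X.wedge (X.conj φ1) φ2) = 0 := by
    rw [a2c1, map_neg, ← X.wedge_assoc, s2]; simp
  have t2 : X.wedge φ2 (X.wedge (X.conj φ2) φ1) = X.wedge φ1 (X.wedge φ2 (X.conj φ2)) := by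
    rw [a1c2, map_neg, ← X.wedge_assoc, a12]
    simp [X.wedge_assoc]
  have t3 : X.wedge φ2 (X.wedge (X.conj φ1) φ1) = X.wedge φ1 (X.wedge φ2 (X.conj φ1)) := by
    rw [a1c1, map_neg, ← X.wedge_assoc, a12]
    simp [X.wedge_assoc]
  have hsgn : ((-1 : ℂ) ^ ((1:ℤ) + 0)) = -1 := by norm_num
  have hsgn' : ((-1 : ℂ) ^ ((0:ℤ) + 1)) = -1 := by norm_num
  -- ∂ of the two pieces of ω
  have e1 : X.pd (X.wedge φ1 (X.conj φ1)) = 0 := by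
    rw [X.pd_leibniz 1 0 φ1 h1, hpd1, pdc1]
    simp
  have e2 : X.pd (X.wedge φ2 (X.conj φ2)) =
      (-Complex.I) • X.wedge φ1 (X.wedge φ2 (X.conj φ1)) := by
    rw [X.pd_leibniz 1 0 φ2 h2, hpd2, pdc2, hsgn]
    simp only [map_add, map_sub, map_smul, LinearMap.smul_apply, LinearMap.add_apply,
      LinearMap.sub_apply, t1, t2, t3]
    rw [X.wedge_assoc]
    module
  have hscal : κ * (-Complex.I) = -(1:ℂ)/2 := by
    rw [hκdef]
    have : Complex.I ≠ 0 := Complex.I_ne_zero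
    field_simp
  have P1 : X.pd h.omega = (-(1 : ℂ) / 2) • X.wedge φ1 (X.wedge φ2 (X.conj φ1)) := by
    rw [hω, map_smul, map_add, e1, e2, zero_add, smul_smul, hscal]
  have P2 : X.pd h.omega = X.pdbar ((-Complex.I) • X.wedge φ1 φ2) := by
    rw [map_smul, X.pdbar_leibniz 1 0 φ1 h1, hpdbar1, hpdbar2, hsgn]
    simp only [map_add, map_sub, map_smul, LinearMap.smul_apply, LinearMap.add_apply,
      LinearMap.sub_apply, LinearMap.zero_apply, map_zero, zf1]
    rw [P1]
    match_scalars
    rw [hκdef]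
    have hI := Complex.I_ne_zero
    field_simp
  -- ∂̄ ω via conjugation
  have hpdbarω : X.pdbar h.omega =
      (-(1:ℂ)/2) • X.wedge (X.conj φ1) (X.wedge (X.conj φ2) φ1) := by
    have h0 := X.conj_pd h.omega
    rw [h.omega_real] at h0
    rw [← h0, P1, X.conj_smul, X.conj_wedge, X.conj_wedge, X.conj_conj]
    congr 1
    simp [map_div₀, map_ofNat]
  have P3 : X.pd (X.pdbar h.omega) = 0 := by
    rw [hpdbarω, map_smul, X.pd_leibniz 0 1 (X.conj φ1) hc1, pdc1,
      X.pd_leibniz 0 1 (X.conj φ2) hc2, hpd1, pdc2, hsgn']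
    simp only [map_add, map_sub, map_smul, map_neg, map_zero, LinearMap.smul_apply,
      LinearMap.add_apply, LinearMap.sub_apply, LinearMap.neg_apply, LinearMap.zero_apply,
      X.wedge_assoc, s1, s2, sc1, zc1, smul_zero, sub_zero, add_zero, zero_add, neg_zero,
      neg_neg, smul_neg]
  have hw : X.wpow h.omega (X.n - 1) = h.omega := by
    rw [hn]
    show X.wedge h.omega (X.wpow h.omega 0) = h.omega
    show X.wedge h.omega X.one = h.omega
    exact X.wedge_one h.omega
  refine ⟨P1, P2, P3, ?_, (-Complex.I) • X.wedge φ1 φ2, ?_, ?_⟩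
  · show X.pd (X.pdbar (X.wpow h.omega (X.n - 1))) = 0
    rw [hw]; exact P3
  · have hm := X.wedge_mem 1 0 1 0 φ1 h1 φ2 h2
    norm_num at hm
    rw [hn]
    norm_num
    exact Submodule.smul_mem _ _ hm
  · rw [hw, ← P2]
end
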